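/- arXiv:2101.06087 — 2 statements merged into one kernel-verified Lean document; each statement's English description precedes it below -/
import Mathlib

section
/- Component composition is well-defined: for any monotone composable components m1 and m2, the least fixed point of χ_{m1×m2} exists for every ρ⁻ ∈ Env(P⁻_{m1×m2}), and the resulting composition m1 × m2 is itself a monotone component with interface (P⁻_{m1×m2}, P⁺_{m1×m2}). -/
namespace AbsCT

open Set

open scoped Classical

/-- A procedure environment over the set `P` of procedure names:
a map assigning to each `p ∈ P` a denotation (a binary relation on states). -/
def Env (State : Type*) {Prc : Type*} (P : Set Prc) : Type _ :=
  ↥P → Set (State × State)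

namespace Env

variable {Prc State : Type*}

instance {P : Set Prc} : CompleteLattice (Env State P) :=
  inferInstanceAs (CompleteLattice (↥P → Set (State × State)))

/-- The order `⊑` between procedure environments over possibly different domains. -/
def le {P P' : Set Prc} (ρ : Env State P) (ρ' : Env State P') : Prop :=
  ∃ h : P ⊆ P', ∀ p (hp : p ∈ P), ρ ⟨p, hp⟩ ⊆ ρ' ⟨p, h hp⟩

/-- Heterogeneous equality of environments: same domain, same denotations. -/
def eq' {P Q : Set Prc} (ρ : Env State P) (ρ' : Env State Q) : Prop :=
  P = Q ∧ ∀ p (hp : p ∈ P) (hq : p ∈ Q), ρ ⟨p, hp⟩ = ρ' ⟨p, hq⟩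

/-- Greatest lower bound `⊓`, pointwise by intersection, on the intersection of domains. -/
def meet {P Q : Set Prc} (ρ1 : Env State P) (ρ2 : Env State Q) : Env State (P ∩ Q) :=
  fun p => ρ1 ⟨p.1, p.2.1⟩ ∩ ρ2 ⟨p.1, p.2.2⟩

/-- Extension of an environment to the whole name universe, by `∅` outside its domain. -/
def ext0 {P : Set Prc} (ρ : Env State P) : Prc → Set (State × State) :=
  fun p => ⋃ h : p ∈ P, ρ ⟨p, h⟩

/-- Least upper bound `⊔`, pointwise by union, on the union of domains. -/
def join {P Q : Set Prc} (ρ1 : Env State P) (ρ2 : Env State Q) : Env State (P ∪ Q) :=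
  fun p => ρ1.ext0 p.1 ∪ ρ2.ext0 p.1

/-- Transport of an environment to a smaller domain. -/
def up {P Q : Set Prc} (ρ : Env State P) (h : Q ⊆ P) : Env State Q :=
  fun p => ρ ⟨p.1, h p.2⟩

/-- Restriction of an environment to (the intersection of its domain with) `Q`. -/
def res {P : Set Prc} (ρ : Env State P) (Q : Set Prc) : Env State (P ∩ Q) :=
  fun p => ρ ⟨p.1, p.2.1⟩

end Env

/-- The environment `ρ⊤_P` mapping every `p ∈ P` to `State × State`. -/
def topEnv (State : Type*) {Prc : Type*} (P : Set Prc) : Env State P :=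
  fun _ => Set.univ

/-- A component: an interface of disjoint finite sets of required and provided
procedure names, together with a map from environments of the required
procedures to environments of the provided ones. -/
structure Component (Prc State : Type*) where
  req : Set Prc
  prov : Set Prc
  hdisj : Disjoint req prov
  hreqFin : req.Finite
  hprovFin : prov.Finite
  func : Env State req → Env State prov

namespace Component

variable {Prc State : Type*}

/-- Monotonicity of a component. -/
def Mono (m : Component Prc State) : Prop :=
  ∀ ρ ρ' : Env State m.req, ρ ≤ ρ' → m.func ρ ≤ m.func ρ'

/-- Two components are composable iff their provided sets are disjoint. -/
def Composable (m1 m2 : Component Prc State) : Prop :=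
  m1.prov ∩ m2.prov = ∅

/-- The required procedures of the composition `m1 × m2`. -/
def compReq (m1 m2 : Component Prc State) : Set Prc :=
  (m1.req ∪ m2.req) \ (m1.prov ∪ m2.prov)

/-- The function `χ_{m1×m2}`, relative to `ρ⁻ ∈ Env(P⁻_{m1×m2})`. -/
def chi (m1 m2 : Component Prc State) (ρm : Env State (compReq m1 m2))
    (ρp : Env State (m1.prov ∪ m2.prov)) : Env State (m1.prov ∪ m2.prov) :=
  fun p =>
    if h1 : p.1 ∈ m1.prov then
      m1.func (fun q =>
        if h2 : q.1 ∈ m2.prov then ρp ⟨q.1, Or.inr h2⟩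
        else ρm ⟨q.1, ⟨Or.inl q.2, by
          rintro (hc | hc)
          · exact Set.disjoint_left.mp m1.hdisj q.2 hc
          · exact h2 hc⟩⟩) ⟨p.1, h1⟩
    else
      m2.func (fun q =>
        if h2 : q.1 ∈ m1.prov then ρp ⟨q.1, Or.inl h2⟩
        else ρm ⟨q.1, ⟨Or.inr q.2, by
          rintro (hc | hc)
          · exact h2 hc
          · exact Set.disjoint_left.mp m2.hdisj q.2 hc⟩⟩) ⟨p.1, p.2.resolve_left h1⟩

/-- Component composition `m1 × m2`: its function maps `ρ⁻` to the least fixed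
point of `χ_{m1×m2}` (obtained, à la Knaster-Tarski, as the infimum of all
prefixed points). -/
noncomputable def comp (m1 m2 : Component Prc State) : Component Prc State where
  req := compReq m1 m2
  prov := m1.prov ∪ m2.prov
  hdisj := Set.disjoint_left.mpr fun _ hq => hq.2
  hreqFin := (m1.hreqFin.union m2.hreqFin).diff
  hprovFin := m1.hprovFin.union m2.hprovFin
  func := fun ρm => sInf {ρp | chi m1 m2 ρm ρp ≤ ρp}

/-- Heterogeneous equality of components: same interface, and equal as functions. -/
def Equiv (m1 m2 : Component Prc State) : Prop :=
  m1.req = m2.req ∧ m1.prov = m2.prov ∧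
  ∀ (ρ : Env State m1.req) (ρ' : Env State m2.req),
    Env.eq' ρ ρ' → Env.eq' (m1.func ρ) (m2.func ρ')

end Component

/-- A denotational contract: an interface of disjoint finite sets of required
and provided procedure names, an assumption environment over the required
procedures, and a guarantee environment over the provided ones. -/
structure DContract (Prc State : Type*) where
  req : Set Prc
  prov : Set Prc
  hdisj : Disjoint req prov
  hreqFin : req.Finite
  hprovFin : prov.Finite
  assm : Env State req
  guar : Env State prov

namespace DContract

variable {Prc State : Type*}

/-- `m ⊨ c` : the component `m` implements the contract `c`. -/
def Implements (m : Component Prc State) (c : DContract Prc State) : Prop :=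
  c.req ⊆ m.req ∧ m.prov ⊆ c.prov ∧
    Env.le
      (m.func ((c.assm.join (topEnv State (m.req \ c.req))).up
        (fun p hp => by
          by_cases h : p ∈ c.req
          · exact Or.inl h
          · exact Or.inr ⟨hp, h⟩)))
      c.guar

/-- `m` is an environment for the contract `c`. -/
def IsEnvFor (m : Component Prc State) (c : DContract Prc State) : Prop :=
  ∀ m' : Component Prc State, Implements m' c →
    Component.Composable m m' ∧
    ∀ ρ : Env State (Component.compReq m m'),
      Env.le (((m.comp m').func ρ).res c.prov) c.guar

/-- Contract refinement `c ⪯ c'`. -/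
def Refines (c c' : DContract Prc State) : Prop :=
  Env.le c'.assm c.assm ∧ Env.le c.guar c'.guar

/-- Contract conjunction `c1 ∧ c2`. -/
def conj (c1 c2 : DContract Prc State) : DContract Prc State where
  req := c1.req ∪ c2.req
  prov := c1.prov ∩ c2.prov
  hdisj := Set.disjoint_left.mpr (by
    rintro p (hp | hp) hq
    · exact Set.disjoint_left.mp c1.hdisj hp hq.1
    · exact Set.disjoint_left.mp c2.hdisj hp hq.2)
  hreqFin := c1.hreqFin.union c2.hreqFin
  hprovFin := c1.hprovFin.inter_of_left _
  assm := c1.assm.join c2.assm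
  guar := c1.guar.meet c2.guar

/-- Contract composability. -/
def Composable (c1 c2 : DContract Prc State) : Prop :=
  c1.prov ∩ c2.prov = ∅ ∧
  (∀ p (h1 : p ∈ c1.req) (h2 : p ∈ c2.prov), c2.guar ⟨p, h2⟩ ⊆ c1.assm ⟨p, h1⟩) ∧
  (∀ p (h2 : p ∈ c2.req) (h1 : p ∈ c1.prov), c1.guar ⟨p, h1⟩ ⊆ c2.assm ⟨p, h2⟩)

/-- Contract composition `c1 ⊗ c2`. -/
def comp (c1 c2 : DContract Prc State) : DContract Prc State where
  req := (c1.req ∪ c2.req) \ (c1.prov ∪ c2.prov)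
  prov := c1.prov ∪ c2.prov
  hdisj := Set.disjoint_left.mpr fun _ hq => hq.2
  hreqFin := (c1.hreqFin.union c2.hreqFin).diff
  hprovFin := c1.hprovFin.union c2.hprovFin
  assm := fun p =>
    (⋂ h : p.1 ∈ c1.req, c1.assm ⟨p.1, h⟩) ∩ ⋂ h : p.1 ∈ c2.req, c2.assm ⟨p.1, h⟩
  guar := c1.guar.join c2.guar

end DContract

/-
`m1 × m2` is defined as Knaster–Tarski's least fixed point `sInf {ρ⁺ | χ ρ⁺ ≤ ρ⁺}`, so the
theorem reduces to the monotonicity of `χ_{m1×m2}` in both of its arguments: monotone in `ρ⁺`,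
`χ` is an order endomorphism of the complete lattice `Env(P⁺_{m1×m2})` and the infimum is its
least fixed point; monotone in `ρ⁻`, it yields pointwise larger endomorphisms, whose least fixed
points are larger.
-/

namespace Component

variable {Prc State : Type*} {m1 m2 : Component Prc State}

theorem chi_mono (h1 : m1.Mono) (h2 : m2.Mono) {ρm ρm' : Env State (compReq m1 m2)}
    {ρp ρp' : Env State (m1.prov ∪ m2.prov)} (hm : ρm ≤ ρm') (hp : ρp ≤ ρp') :
    chi m1 m2 ρm ρp ≤ chi m1 m2 ρm' ρp' := by
  intro p
  unfold chi
  split_ifs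
  · exact h1 _ _ (fun q => by dsimp only; split_ifs; exacts [hp _, hm _]) _
  · exact h2 _ _ (fun q => by dsimp only; split_ifs; exacts [hp _, hm _]) _

def chiHom (h1 : m1.Mono) (h2 : m2.Mono) (ρm : Env State (compReq m1 m2)) :
    Env State (m1.prov ∪ m2.prov) →o Env State (m1.prov ∪ m2.prov) where
  toFun := chi m1 m2 ρm
  monotone' _ _ := chi_mono h1 h2 le_rfl

theorem monotone_chiHom (h1 : m1.Mono) (h2 : m2.Mono) : Monotone (chiHom h1 h2) :=
  fun _ _ hm _ => chi_mono h1 h2 hm le_rfl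

theorem comp_func_eq_lfp (h1 : m1.Mono) (h2 : m2.Mono) (ρm : Env State (compReq m1 m2)) :
    (m1.comp m2).func ρm = OrderHom.lfp (chiHom h1 h2 ρm) :=
  rfl

end Component

theorem comp_well_defined_general {Prc State : Type*} (m1 m2 : Component Prc State)
    (h1 : m1.Mono) (h2 : m2.Mono) :
    (m1.comp m2).req = (m1.req ∪ m2.req) \ (m1.prov ∪ m2.prov) ∧
    (m1.comp m2).prov = m1.prov ∪ m2.prov ∧
    (∀ ρm : Env State (Component.compReq m1 m2),
      IsLeast {ρ' | Component.chi m1 m2 ρm ρ' = ρ'} ((m1.comp m2).func ρm)) ∧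
    (m1.comp m2).Mono := by
  refine ⟨rfl, rfl, fun ρm => ?_, fun ρm ρm' hm => ?_⟩
  · rw [Component.comp_func_eq_lfp h1 h2]
    exact (Component.chiHom h1 h2 ρm).isLeast_lfp
  · exact OrderHom.lfp.monotone (Component.monotone_chiHom h1 h2 hm)

/-- Component composition is well-defined: for monotone composable
components `m1`, `m2`, the least fixed point of `χ_{m1×m2}` exists for every
`ρ⁻ ∈ Env(P⁻_{m1×m2})` (and is the value of `(m1 × m2)(ρ⁻)`), and the
composition `m1 × m2` is itself a monotone component with interface
`(P⁻_{m1×m2}, P⁺_{m1×m2})`. -/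
theorem comp_well_defined {Prc State : Type*} (m1 m2 : Component Prc State)
    (h1 : m1.Mono) (h2 : m2.Mono) (hc : Component.Composable m1 m2) :
    (m1.comp m2).req = (m1.req ∪ m2.req) \ (m1.prov ∪ m2.prov) ∧
    (m1.comp m2).prov = m1.prov ∪ m2.prov ∧
    (∀ ρm : Env State (Component.compReq m1 m2),
      IsLeast {ρ' | Component.chi m1 m2 ρm ρ' = ρ'} ((m1.comp m2).func ρm)) ∧
    (m1.comp m2).Mono :=
  comp_well_defined_general m1 m2 h1 h2

end AbsCT
end

section
/- (Bekić's Lemma, binary case) Let L1 and L2 be complete lattices and let f : L1 × L2 → L1 and g : L1 × L2 → L2 be monotone functions. Then the least fixed point of the monotone map (x, y) ↦ (f(x, y), g(x, y)) on the product lattice L1 × L2 equals (x₀, y₀), where x₀ is the least fixed point of x ↦ f(x, μy. g(x, y)) (with μy. g(x, y) denoting the least fixed point of y ↦ g(x, y) for fixed x), and y₀ is the least fixed point of y ↦ g(x₀, y). -/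
/-- If `x0` is the least fixed point of a monotone `h`, then `x0` is below any
prefixed point of `h`. -/
lemma le_of_prefixed {L : Type*} [CompleteLattice L] (h : L →o L) (x0 : L)
    (hx0 : IsLeast {x | h x = x} x0) {a : L} (ha : h a ≤ a) : x0 ≤ a :=
  le_trans (hx0.2 h.map_lfp) (OrderHom.lfp_le h ha)

/-- Bekić's Lemma, binary case: For complete lattices `L1`, `L2`
and monotone `f : L1 × L2 → L1`, `g : L1 × L2 → L2`, the least fixed point of
the monotone map `(x, y) ↦ (f (x, y), g (x, y))` on the product lattice equals
`(x₀, y₀)`, where `x₀ = μx. f (x, μy. g (x, y))` and `y₀ = μy. g (x₀, y)`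
(least fixed points characterised by `IsLeast`). -/
theorem bekic_binary {L1 L2 : Type*} [CompleteLattice L1] [CompleteLattice L2]
    (f : L1 × L2 → L1) (g : L1 × L2 → L2) (hf : Monotone f) (hg : Monotone g)
    (gfix : L1 → L2) (hgfix : ∀ x : L1, IsLeast {y | g (x, y) = y} (gfix x))
    (x0 : L1) (hx0 : IsLeast {x | f (x, gfix x) = x} x0)
    (y0 : L2) (hy0 : IsLeast {y | g (x0, y) = y} y0) :
    IsLeast {q : L1 × L2 | (f q, g q) = q} (x0, y0) := by
  have gmono : Monotone gfix := by
    intro x x' hxx'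
    refine le_of_prefixed ⟨fun y => g (x, y), fun a b hab => hg ⟨le_rfl, hab⟩⟩
      (gfix x) (hgfix x) ?_
    calc g (x, gfix x') ≤ g (x', gfix x') := hg ⟨hxx', le_rfl⟩
      _ = gfix x' := (hgfix x').1
  have hy0gfix : y0 = gfix x0 := le_antisymm (hy0.2 (hgfix x0).1) ((hgfix x0).2 hy0.1)
  constructor
  · show (f (x0, y0), g (x0, y0)) = (x0, y0)
    have h1 : f (x0, y0) = x0 := by rw [hy0gfix]; exact hx0.1
    have h2 : g (x0, y0) = y0 := hy0.1
    simp [h1, h2]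
  · rintro ⟨a, b⟩ hab
    have hfa : f (a, b) = a := congrArg Prod.fst hab
    have hgb : g (a, b) = b := congrArg Prod.snd hab
    have hgfab : gfix a ≤ b := (hgfix a).2 hgb
    have hxa : x0 ≤ a := by
      refine le_of_prefixed ⟨fun x => f (x, gfix x), fun u v huv => hf ⟨huv, gmono huv⟩⟩
        x0 hx0 ?_
      calc f (a, gfix a) ≤ f (a, b) := hf ⟨le_rfl, hgfab⟩
        _ = a := hfa
    exact ⟨hxa, hy0gfix ▸ le_trans (gmono hxa) hgfab⟩
end
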